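/- Let M be a real m×n matrix, let X be a real m×l matrix of full rank l, and let F be a real k×m matrix with m ≥ k ≥ l such that FX has full rank l. Set Y = (FX)^+FM and W = I_m − X(FX)^+F. Then M − XY = W(M − XX^+M); consequently ||M − XY|| ≤ ||W||·||M − XX^+M|| and ||W|| ≤ ||I_m|| + ||X||·||F||·||(FX)^+||, where ||·|| denotes either the spectral norm or the Frobenius norm (all inequalities hold for both norms). -/

import Mathlib

open Matrix MeasureTheory ProbabilityTheory Real
open scoped BigOperators ENNReal

noncomputable section

namespace LRA

theorem _root_.Matrix.isHermitian_transpose_mul_self {m n : Type*} [Fintype m]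
    (A : Matrix m n ℝ) : (Aᵀ * A).IsHermitian := by
  simpa [conjTranspose_eq_transpose_of_trivial] using Matrix.isHermitian_conjTranspose_mul_self A

/-- The `j`-th largest singular value (1-indexed) of a real `m × n` matrix;
by convention it is `0` for `j = 0` or `j > n`. -/
noncomputable def sval {m n : ℕ} (A : Matrix (Fin m) (Fin n) ℝ) (j : ℕ) : ℝ :=
  if hj : 1 ≤ j ∧ j ≤ n then
    Real.sqrt ((Matrix.isHermitian_transpose_mul_self A).eigenvalues
      (Tuple.sort (Matrix.isHermitian_transpose_mul_self A).eigenvalues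
        (Fin.rev ⟨j - 1, by omega⟩)))
  else 0

/-- Spectral norm: the largest singular value. -/
noncomputable def specNorm {m n : ℕ} (A : Matrix (Fin m) (Fin n) ℝ) : ℝ := sval A 1

/-- Frobenius norm. -/
noncomputable def frobNorm {m n : ℕ} (A : Matrix (Fin m) (Fin n) ℝ) : ℝ :=
  Real.sqrt (∑ i, ∑ j, (A i j) ^ 2)

/-- The optimal Frobenius rank-`r` approximation error `(∑_{j>r} σ_j(A)²)^{1/2}`. -/
noncomputable def frobTail {m n : ℕ} (A : Matrix (Fin m) (Fin n) ℝ) (r : ℕ) : ℝ :=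
  Real.sqrt (∑ j ∈ Finset.Ioc r n, sval A j ^ 2)

/-- The four Penrose conditions. -/
def IsMoorePenrose {m n : ℕ} (A : Matrix (Fin m) (Fin n) ℝ)
    (B : Matrix (Fin n) (Fin m) ℝ) : Prop :=
  A * B * A = A ∧ B * A * B = B ∧ (A * B)ᵀ = A * B ∧ (B * A)ᵀ = B * A

open scoped Classical in
/-- The Moore–Penrose pseudoinverse. -/
noncomputable def pinv {m n : ℕ} (A : Matrix (Fin m) (Fin n) ℝ) :
    Matrix (Fin n) (Fin m) ℝ :=
  if h : ∃ B, IsMoorePenrose A B then h.choose else 0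

/-- The `r`-projective volume `∏_{j=1}^r σ_j(A)`. -/
noncomputable def pvol {m n : ℕ} (r : ℕ) (A : Matrix (Fin m) (Fin n) ℝ) : ℝ :=
  ∏ j ∈ Finset.Icc 1 r, sval A j

instance matrixMeasurableSpace {p q : ℕ} : MeasurableSpace (Matrix (Fin p) (Fin q) ℝ) :=
  MeasurableSpace.pi

/-- A random matrix all of whose entries are i.i.d. standard normal random variables. -/
def IsGaussianMatrix {Ω : Type*} [MeasurableSpace Ω] (μ : Measure Ω) {p q : ℕ}
    (G : Ω → Matrix (Fin p) (Fin q) ℝ) : Prop :=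
  Measurable G ∧
  @iIndepFun Ω (Fin p × Fin q) _ (fun _ => ℝ) (fun _ : Fin p × Fin q => (inferInstance : MeasurableSpace ℝ))
    (fun ij ω => G ω ij.1 ij.2) μ ∧
  ∀ i j, Measure.map (fun ω => G ω i j) μ = gaussianReal 0 1

/-- The `k × l` submatrix of `W` with rows indexed by `I` and columns by `J`. -/
noncomputable def subm {m n k l : ℕ} (W : Matrix (Fin m) (Fin n) ℝ)
    {I : Finset (Fin m)} {J : Finset (Fin n)} (hI : I.card = k) (hJ : J.card = l) :
    Matrix (Fin k) (Fin l) ℝ :=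
  W.submatrix (fun i => ((I.orderIsoOfFin hI i : I) : Fin m))
    (fun j => ((J.orderIsoOfFin hJ j : J) : Fin n))


/-! Since `F X` has full column rank, `G = (F X)⁺ F` is a left inverse of `X`, so `(I - X G) X = 0`
and `M - X Y = (I - X G) M = (I - X G) (M - X X⁺ M)`. The norm bounds then use only the triangle
inequality and submultiplicativity, which the Frobenius norm satisfies and the spectral norm
inherits from the `ℓ²` operator norm: `σ₁(A)²` is the largest eigenvalue of `Aᵀ A`, which is
`‖Aᵀ A‖ = ‖A‖²` by the spectral theorem and the C⋆-identity. -/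

section FullColumnRank

variable {m n R : Type*} [Fintype m] [Fintype n] [DecidableEq n]
  [Field R] [LinearOrder R] [IsStrictOrderedRing R]

theorem isUnit_transpose_mul_self_of_rank_eq {A : Matrix m n R} (hA : A.rank = Fintype.card n) :
    IsUnit (Aᵀ * A) := by
  rw [← Matrix.mulVec_surjective_iff_isUnit]
  have hrange : LinearMap.range (Aᵀ * A).mulVecLin = ⊤ := by
    apply Submodule.eq_top_of_finrank_eq
    rw [← Matrix.rank, Matrix.rank_transpose_mul_self, hA, Module.finrank_fintype_fun_eq_card]
  exact LinearMap.range_eq_top.mp hrange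

theorem inv_transpose_mul_self_mul_transpose_mul_self {A : Matrix m n R}
    (hA : A.rank = Fintype.card n) : (Aᵀ * A)⁻¹ * Aᵀ * A = 1 := by
  rw [Matrix.mul_assoc, Matrix.nonsing_inv_mul _
    ((Matrix.isUnit_iff_isUnit_det _).mp (isUnit_transpose_mul_self_of_rank_eq hA))]

end FullColumnRank

section Pseudoinverse

variable {m n : ℕ} {A : Matrix (Fin m) (Fin n) ℝ}

theorem isMoorePenrose_of_rank_eq (hA : A.rank = n) : IsMoorePenrose A ((Aᵀ * A)⁻¹ * Aᵀ) := by
  have hL := inv_transpose_mul_self_mul_transpose_mul_self (A := A) (by simpa using hA)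
  have hsymm : ((Aᵀ * A)⁻¹)ᵀ = (Aᵀ * A)⁻¹ := by
    rw [Matrix.transpose_nonsing_inv, Matrix.transpose_mul, Matrix.transpose_transpose]
  refine ⟨by rw [Matrix.mul_assoc A, hL, Matrix.mul_one], by rw [hL, Matrix.one_mul], ?_,
    by rw [hL, Matrix.transpose_one]⟩
  rw [← Matrix.mul_assoc, Matrix.transpose_mul, Matrix.transpose_mul, hsymm,
    Matrix.transpose_transpose, Matrix.mul_assoc]

theorem isMoorePenrose_pinv {B : Matrix (Fin n) (Fin m) ℝ} (hB : IsMoorePenrose A B) :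
    IsMoorePenrose A (pinv A) := by
  have h : ∃ B, IsMoorePenrose A B := ⟨B, hB⟩
  rw [pinv, dif_pos h]
  exact h.choose_spec

theorem pinv_mul_self_of_rank_eq (hA : A.rank = n) : pinv A * A = 1 := by
  set L := (Aᵀ * A)⁻¹ * Aᵀ
  have hL : L * A = 1 := inv_transpose_mul_self_mul_transpose_mul_self (by simpa using hA)
  calc pinv A * A = L * (A * pinv A * A) := by
        rw [Matrix.mul_assoc A, ← Matrix.mul_assoc, hL, Matrix.one_mul]
    _ = 1 := by rw [(isMoorePenrose_pinv (isMoorePenrose_of_rank_eq hA)).1, hL]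

end Pseudoinverse

theorem one_sub_mul_mul_sub_mul_of_mul_eq_one {R m n l : Type*} [Ring R] [Fintype m] [Fintype l]
    [DecidableEq m] [DecidableEq l] {X : Matrix m l R} {G : Matrix l m R} (hGX : G * X = 1)
    (M : Matrix m n R) (Z : Matrix l n R) :
    (1 - X * G) * (M - X * Z) = M - X * (G * M) := by
  simp only [Matrix.sub_mul, Matrix.mul_sub, Matrix.one_mul, Matrix.mul_assoc,
    ← Matrix.mul_assoc G X, hGX]
  abel

structure IsSubmultiplicativeNorm (N : ∀ {p q : ℕ}, Matrix (Fin p) (Fin q) ℝ → ℝ) : Prop where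
  nonneg {p q : ℕ} (A : Matrix (Fin p) (Fin q) ℝ) : 0 ≤ N A
  sub_le {p q : ℕ} (A B : Matrix (Fin p) (Fin q) ℝ) : N (A - B) ≤ N A + N B
  mul_le {p q r : ℕ} (A : Matrix (Fin p) (Fin q) ℝ) (B : Matrix (Fin q) (Fin r) ℝ) :
    N (A * B) ≤ N A * N B

theorem IsSubmultiplicativeNorm.one_sub_mul_mul_le
    {N : ∀ {p q : ℕ}, Matrix (Fin p) (Fin q) ℝ → ℝ} (hN : IsSubmultiplicativeNorm N)
    {m k l : ℕ} (X : Matrix (Fin m) (Fin l) ℝ) (G : Matrix (Fin l) (Fin k) ℝ)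
    (F : Matrix (Fin k) (Fin m) ℝ) :
    N (1 - X * G * F) ≤ N (1 : Matrix (Fin m) (Fin m) ℝ) + N X * N F * N G :=
  calc N (1 - X * G * F) ≤ N (1 : Matrix (Fin m) (Fin m) ℝ) + N (X * G) * N F :=
        (hN.sub_le _ _).trans (add_le_add_right (hN.mul_le _ _) _)
    _ ≤ N (1 : Matrix (Fin m) (Fin m) ℝ) + N X * N G * N F := by
        gcongr
        exacts [hN.nonneg F, hN.mul_le X G]
    _ = N (1 : Matrix (Fin m) (Fin m) ℝ) + N X * N F * N G := by ring

-- `Fin.rev ⟨0, _⟩` is the last index, and `f ∘ Tuple.sort f` is monotone.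
theorem le_apply_sort_rev_zero {α : Type*} [LinearOrder α] {n : ℕ} (f : Fin n → α) (i : Fin n) :
    f i ≤ f (Tuple.sort f (Fin.rev ⟨0, i.pos⟩)) := by
  conv_lhs => rw [← (Tuple.sort f).apply_symm_apply i]
  exact Tuple.monotone_sort f (Fin.le_rev_iff.mpr (Nat.zero_le _))

theorem norm_eq_apply_sort_rev_zero {n : ℕ} {f : Fin n → ℝ} (hf : 0 ≤ f) (i : Fin n) :
    ‖f‖ = f (Tuple.sort f (Fin.rev ⟨0, i.pos⟩)) := by
  set j := Tuple.sort f (Fin.rev ⟨0, i.pos⟩)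
  refine le_antisymm ((pi_norm_le_iff_of_nonneg (hf j)).mpr fun i' => ?_) ?_
  · rw [Real.norm_of_nonneg (hf i')]
    exact le_apply_sort_rev_zero f i'
  · simpa [Real.norm_of_nonneg (hf j)] using norm_le_pi_norm f j

section L2OperatorNorm

open scoped Matrix.Norms.L2Operator

theorem l2_opNorm_eq_norm_eigenvalues {n : Type*} [Fintype n] [DecidableEq n] {S : Matrix n n ℝ}
    (hS : S.IsHermitian) : ‖S‖ = ‖hS.eigenvalues‖ := by
  conv_lhs => rw [hS.spectral_theorem]
  rw [Unitary.conjStarAlgAut_apply, CStarRing.norm_mul_mem_unitary _ (Unitary.star_mem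
    hS.eigenvectorUnitary.2), CStarRing.norm_coe_unitary_mul, Matrix.l2_opNorm_diagonal]
  rfl

theorem specNorm_eq_l2_opNorm {m n : ℕ} (A : Matrix (Fin m) (Fin n) ℝ) : specNorm A = ‖A‖ := by
  rcases Nat.eq_zero_or_pos n with rfl | hn
  · simp [specNorm, sval, Subsingleton.elim A 0]
  · have hS := Matrix.isHermitian_transpose_mul_self A
    have hnonneg : 0 ≤ hS.eigenvalues := Matrix.eigenvalues_conjTranspose_mul_self_nonneg A
    have hgram : ‖Aᵀ * A‖ = ‖A‖ * ‖A‖ := Matrix.l2_opNorm_conjTranspose_mul_self A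
    rw [specNorm, sval, dif_pos ⟨le_rfl, hn⟩, ← norm_eq_apply_sort_rev_zero hnonneg ⟨0, hn⟩,
      ← l2_opNorm_eq_norm_eigenvalues, hgram, Real.sqrt_mul_self (norm_nonneg A)]

theorem isSubmultiplicativeNorm_specNorm : IsSubmultiplicativeNorm specNorm := by
  refine ⟨fun A => ?_, fun A B => ?_, fun A B => ?_⟩ <;> simp only [specNorm_eq_l2_opNorm]
  · exact norm_nonneg A
  · exact norm_sub_le A B
  · exact Matrix.l2_opNorm_mul A B

end L2OperatorNorm

section FrobeniusNorm

attribute [local instance] Matrix.frobeniusNormedAddCommGroup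

theorem frobNorm_eq_frobenius_norm {m n : ℕ} (A : Matrix (Fin m) (Fin n) ℝ) : frobNorm A = ‖A‖ := by
  rw [frobNorm, Matrix.frobenius_norm_def, Real.sqrt_eq_rpow]
  simp only [Real.rpow_two, Real.norm_eq_abs, sq_abs]

theorem isSubmultiplicativeNorm_frobNorm : IsSubmultiplicativeNorm frobNorm := by
  refine ⟨fun A => ?_, fun A B => ?_, fun A B => ?_⟩ <;> simp only [frobNorm_eq_frobenius_norm]
  · exact norm_nonneg A
  · exact norm_sub_le A B
  · exact Matrix.frobenius_norm_mul A B

end FrobeniusNorm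

theorem premultiplication_impact_general {k l m n : ℕ}
    (M : Matrix (Fin m) (Fin n) ℝ) (X : Matrix (Fin m) (Fin l) ℝ)
    (F : Matrix (Fin k) (Fin m) ℝ)
    (hFX : (F * X).rank = l)
    (Y : Matrix (Fin l) (Fin n) ℝ) (hY : Y = pinv (F * X) * F * M)
    (W : Matrix (Fin m) (Fin m) ℝ) (hW : W = 1 - X * pinv (F * X) * F) :
    M - X * Y = W * (M - X * pinv X * M) ∧
    specNorm (M - X * Y) ≤ specNorm W * specNorm (M - X * pinv X * M) ∧
    frobNorm (M - X * Y) ≤ frobNorm W * frobNorm (M - X * pinv X * M) ∧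
    specNorm W ≤ specNorm (1 : Matrix (Fin m) (Fin m) ℝ) +
        specNorm X * specNorm F * specNorm (pinv (F * X)) ∧
    frobNorm W ≤ frobNorm (1 : Matrix (Fin m) (Fin m) ℝ) +
        frobNorm X * frobNorm F * frobNorm (pinv (F * X)) := by
  have hleft : pinv (F * X) * F * X = 1 := by
    rw [Matrix.mul_assoc, pinv_mul_self_of_rank_eq hFX]
  have hres : M - X * Y = W * (M - X * pinv X * M) := by
    rw [hW, Matrix.mul_assoc X (pinv X), Matrix.mul_assoc X (pinv (F * X)),
      one_sub_mul_mul_sub_mul_of_mul_eq_one hleft, hY, Matrix.mul_assoc]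
  have hbounds : ∀ N, IsSubmultiplicativeNorm N →
      N (M - X * Y) ≤ N W * N (M - X * pinv X * M) ∧
      N W ≤ N (1 : Matrix (Fin m) (Fin m) ℝ) + N X * N F * N (pinv (F * X)) := fun N hN =>
    ⟨hres ▸ hN.mul_le _ _, hW ▸ hN.one_sub_mul_mul_le _ _ _⟩
  obtain ⟨hspec_res, hspec_W⟩ := hbounds _ isSubmultiplicativeNorm_specNorm
  obtain ⟨hfrob_res, hfrob_W⟩ := hbounds _ isSubmultiplicativeNorm_frobNorm
  exact ⟨hres, hspec_res, hfrob_res, hspec_W, hfrob_W⟩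

theorem premultiplication_impact {k l m n : ℕ} (hkm : k ≤ m) (hlk : l ≤ k)
    (M : Matrix (Fin m) (Fin n) ℝ) (X : Matrix (Fin m) (Fin l) ℝ)
    (F : Matrix (Fin k) (Fin m) ℝ)
    (hX : X.rank = l) (hFX : (F * X).rank = l)
    (Y : Matrix (Fin l) (Fin n) ℝ) (hY : Y = pinv (F * X) * F * M)
    (W : Matrix (Fin m) (Fin m) ℝ) (hW : W = 1 - X * pinv (F * X) * F) :
    M - X * Y = W * (M - X * pinv X * M) ∧
    specNorm (M - X * Y) ≤ specNorm W * specNorm (M - X * pinv X * M) ∧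
    frobNorm (M - X * Y) ≤ frobNorm W * frobNorm (M - X * pinv X * M) ∧
    specNorm W ≤ specNorm (1 : Matrix (Fin m) (Fin m) ℝ) +
        specNorm X * specNorm F * specNorm (pinv (F * X)) ∧
    frobNorm W ≤ frobNorm (1 : Matrix (Fin m) (Fin m) ℝ) +
        frobNorm X * frobNorm F * frobNorm (pinv (F * X)) :=
  premultiplication_impact_general M X F hFX Y hY W hW

end LRA
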